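/- For any prescribed length L > |P₁ − P₀| and any λ > 0, with β₀ = β₁ = 0, there exists at least one α₀ > 0 such that the length-constraint equation e(α₀, λα₀, 0, 0) = 0 holds, and at least one α₀ > 0 such that e(α₀, −λα₀, 0, 0) = 0; i.e., the G² PH biarc interpolant of degree 7 with the prescribed arc length exists for any admissible data. -/

import Mathlib

/-!
With `β₀ = β₁ = 0` the inner coefficients are `w_{A,1} = w_{A,0}(1 + iκ₀α₀²/12)` and
`w_{B,2} = w_{B,3}(1 − iκ₁α₁²/12)`, and `v − |U|²` becomes a Hermitian form in
`(w_{A,0}, w_{B,3})` which, for every value of the curvature terms, dominates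
`|w_{A,0}|² + |w_{B,3}|²`, up to the constant `−(140/13)L`. Hence along any ray `α₁ = cα₀`
the residual is continuous, equals `(140/13)(|P₁ − P₀| − L) < 0` at `α₀ = 0` and is at least
`α₀² + α₁² − (140/13)L`, so it has a positive zero by the intermediate value theorem.
-/

open Complex

/-- The square root `χ(c)` from Lemma 1. -/
noncomputable def chi (c : ℂ) : ℂ :=
  (Real.sqrt 2 / 2 : ℝ) *
    ((Real.sqrt (‖c‖ + c.re) : ℂ) +
      Complex.I * ((c.im : ℂ) / (Real.sqrt (‖c‖ + c.re) : ℂ)))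

/-- The length-constraint residual `e(α₀,α₁,β₀,β₁) = |U²−V| − |U|² + v` of the degree-7
`C³` PH biarc interpolant. -/
noncomputable def lengthResidual (P₀ P₁ t₀ t₁ : ℂ) (κ₀ κ₁ L α₀ α₁ β₀ β₁ : ℝ) : ℝ :=
  let wA0 : ℂ := (α₀ : ℂ) * chi t₀
  let wB3 : ℂ := (α₁ : ℂ) * chi t₁
  let wA1 : ℂ := (((α₀ ^ 2 + β₀ / 12 : ℝ) : ℂ) * t₀ +
      ((κ₀ : ℂ) * ((α₀ ^ 4 / 12 : ℝ) : ℂ)) * (Complex.I * t₀)) / wA0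
  let wB2 : ℂ := (((α₁ ^ 2 - β₁ / 12 : ℝ) : ℂ) * t₁ -
      ((κ₁ : ℂ) * ((α₁ ^ 4 / 12 : ℝ) : ℂ)) * (Complex.I * t₁)) / wB3
  let U : ℂ := (5 * (wA0 + wB3) + 39 * (wA1 + wB2)) / 52
  let V : ℂ := (40 * (wA0 ^ 2 + wB3 ^ 2) + 49 * (wA0 * wA1 + wB2 * wB3) +
      62 * (wA1 ^ 2 + wB2 ^ 2) + wA0 * wB2 + wA1 * wB3 + 28 * wA1 * wB2 -
      560 * (P₁ - P₀)) / 52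
  let v : ℝ := (40 * ‖wA0‖ ^ 2 + 40 * ‖wB3‖ ^ 2 +
      62 * ‖wA1‖ ^ 2 + 62 * ‖wB2‖ ^ 2 +
      (49 * (wA0 * starRingEnd ℂ wA1) + 49 * (wB2 * starRingEnd ℂ wB3) +
        28 * (wA1 * starRingEnd ℂ wB2) + wA0 * starRingEnd ℂ wB2 +
        wA1 * starRingEnd ℂ wB3).re - 560 * L) / 52
  ‖U ^ 2 - V‖ - ‖U‖ ^ 2 + v

lemma chi_sq {c : ℂ} (h : 0 < ‖c‖ + c.re) : chi c ^ 2 = c := by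
  set r := Real.sqrt (‖c‖ + c.re) with hr_def
  have hr : r ≠ 0 := (Real.sqrt_pos.2 h).ne'
  have hr2 : r ^ 2 = ‖c‖ + c.re := Real.sq_sqrt h.le
  have hnorm : ‖c‖ ^ 2 = c.re ^ 2 + c.im ^ 2 := by
    rw [Complex.sq_norm, Complex.normSq_apply]; ring
  have h2 : Real.sqrt 2 ^ 2 = 2 := Real.sq_sqrt zero_le_two
  have hchi : chi c = ((Real.sqrt 2 / 2 * r : ℝ) : ℂ) +
      ((Real.sqrt 2 / 2 * (c.im / r) : ℝ) : ℂ) * I := by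
    simp only [chi, ← hr_def]; push_cast; ring
  apply Complex.ext
  all_goals
    rw [hchi, sq]
    simp only [Complex.mul_re, Complex.mul_im, Complex.add_re, Complex.add_im,
      Complex.ofReal_re, Complex.ofReal_im, Complex.I_re, Complex.I_im, mul_zero, mul_one,
      sub_zero, add_zero, zero_add]
    field_simp
  · linear_combination (r ^ 4 - c.im ^ 2) * h2 + 2 * (r ^ 2 + ‖c‖ - c.re) * hr2 + 2 * hnorm
  · linear_combination 2 * c.im * h2

lemma norm_chi_sq {c : ℂ} (h : 0 < ‖c‖ + c.re) : ‖chi c‖ ^ 2 = ‖c‖ := by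
  rw [← norm_pow, chi_sq h]

/-- `U`, `V`, `v` of the residual `e = |U² − V| − |U|² + v`, as functions of the preimage
coefficients `w_{A,0}, w_{A,1}, w_{B,2}, w_{B,3}` and of `ΔP = P₁ − P₀`. -/
noncomputable def biarcU (w₀ w₁ w₂ w₃ : ℂ) : ℂ :=
  (5 * (w₀ + w₃) + 39 * (w₁ + w₂)) / 52

noncomputable def biarcV (w₀ w₁ w₂ w₃ ΔP : ℂ) : ℂ :=
  (40 * (w₀ ^ 2 + w₃ ^ 2) + 49 * (w₀ * w₁ + w₂ * w₃) + 62 * (w₁ ^ 2 + w₂ ^ 2) +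
    w₀ * w₂ + w₁ * w₃ + 28 * w₁ * w₂ - 560 * ΔP) / 52

noncomputable def biarcv (w₀ w₁ w₂ w₃ : ℂ) (L : ℝ) : ℝ :=
  (40 * ‖w₀‖ ^ 2 + 40 * ‖w₃‖ ^ 2 + 62 * ‖w₁‖ ^ 2 + 62 * ‖w₂‖ ^ 2 +
    (49 * (w₀ * starRingEnd ℂ w₁) + 49 * (w₂ * starRingEnd ℂ w₃) +
      28 * (w₁ * starRingEnd ℂ w₂) + w₀ * starRingEnd ℂ w₂ + w₁ * starRingEnd ℂ w₃).re -
    560 * L) / 52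

noncomputable def biarcResidual (w₀ w₁ w₂ w₃ ΔP : ℂ) (L : ℝ) : ℝ :=
  ‖biarcU w₀ w₁ w₂ w₃ ^ 2 - biarcV w₀ w₁ w₂ w₃ ΔP‖ - ‖biarcU w₀ w₁ w₂ w₃‖ ^ 2 +
    biarcv w₀ w₁ w₂ w₃ L

lemma biarcv_sub_normSq_biarcU (A B : ℂ) (m n L : ℝ) :
    2704 * (biarcv A (A * (1 + m * I)) (B * (1 - n * I)) B L -
      ‖biarcU A (A * (1 + m * I)) (B * (1 - n * I)) B‖ ^ 2) =
    5916 * (‖A‖ ^ 2 + ‖B‖ ^ 2) + 1703 * (m ^ 2 * ‖A‖ ^ 2 + n ^ 2 * ‖B‖ ^ 2) +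
      (A * starRingEnd ℂ B *
        ((-2312 + 1586 * m * n : ℝ) + (-1924 * (m + n) : ℝ) * I)).re - 29120 * L := by
  simp only [biarcv, biarcU, Complex.sq_norm, Complex.normSq_apply]
  simp only [Complex.add_re, Complex.add_im, Complex.mul_re, Complex.mul_im, Complex.sub_re,
    Complex.sub_im, Complex.div_re, Complex.div_im, Complex.one_re, Complex.one_im,
    Complex.I_re, Complex.I_im, Complex.ofReal_re, Complex.ofReal_im, Complex.conj_re,
    Complex.conj_im, Complex.re_ofNat, Complex.im_ofNat, Complex.normSq_ofNat]
  ring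

lemma mul_mul_le_of_sq_le_four_mul (x y : ℝ) {r p q : ℝ} (hp : 0 ≤ p) (hq : 0 ≤ q)
    (hr : r ^ 2 ≤ 4 * p * q) : x * y * r ≤ p * x ^ 2 + q * y ^ 2 := by
  have hxy : (x * y * r) ^ 2 ≤ (p * x ^ 2 + q * y ^ 2) ^ 2 := by
    nlinarith [mul_le_mul_of_nonneg_left hr (mul_nonneg (sq_nonneg x) (sq_nonneg y)),
      sq_nonneg (p * x ^ 2 - q * y ^ 2)]
  exact (abs_le_of_sq_le_sq' hxy (by positivity)).2

lemma biarcv_sub_normSq_biarcU_ge (A B : ℂ) (m n L : ℝ) :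
    ‖A‖ ^ 2 + ‖B‖ ^ 2 - 140 / 13 * L ≤
      biarcv A (A * (1 + m * I)) (B * (1 - n * I)) B L -
        ‖biarcU A (A * (1 + m * I)) (B * (1 - n * I)) B‖ ^ 2 := by
  set z : ℂ := (-2312 + 1586 * m * n : ℝ) + (-1924 * (m + n) : ℝ) * I
  have hz : ‖z‖ ^ 2 ≤ 4 * (3212 + 1703 * m ^ 2) * (3212 + 1703 * n ^ 2) := by
    rw [Complex.sq_norm, Complex.normSq_add_mul_I]
    nlinarith [sq_nonneg (m - n), sq_nonneg (m + n), sq_nonneg (m * n)]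
  have hre : -(‖A‖ * ‖B‖ * ‖z‖) ≤ (A * starRingEnd ℂ B * z).re := by
    have := Complex.abs_re_le_norm (A * starRingEnd ℂ B * z)
    rw [norm_mul, norm_mul, Complex.norm_conj] at this
    linarith [neg_abs_le (A * starRingEnd ℂ B * z).re]
  have hamgm := mul_mul_le_of_sq_le_four_mul ‖A‖ ‖B‖ (by positivity) (by positivity) hz
  -- of the diagonal coefficient `5916 = 2704 + 3212`, the part `2704 = 52²` yields
  -- `‖A‖² + ‖B‖²` and the rest absorbs the cross term by AM-GM
  have := biarcv_sub_normSq_biarcU A B m n L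
  linarith

lemma biarcResidual_ge (A B ΔP : ℂ) (m n L : ℝ) :
    ‖A‖ ^ 2 + ‖B‖ ^ 2 - 140 / 13 * L ≤
      biarcResidual A (A * (1 + m * I)) (B * (1 - n * I)) B ΔP L := by
  have hv := biarcv_sub_normSq_biarcU_ge A B m n L
  have hnorm := norm_nonneg (biarcU A (A * (1 + m * I)) (B * (1 - n * I)) B ^ 2 -
    biarcV A (A * (1 + m * I)) (B * (1 - n * I)) B ΔP)
  unfold biarcResidual
  linarith

-- At `x * a = 0` both sides are `0`, by `z / 0 = 0`.
lemma sq_mul_mul_div_mul {K : Type*} [Field K] {a t : K} (ha : a ^ 2 = t) (x y : K) :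
    x ^ 2 * t * y / (x * a) = x * a * y := by
  rw [← ha, show x ^ 2 * a ^ 2 * y = x * a * (x * a) * y by ring, mul_div_right_comm,
    mul_self_div_self]

section

variable (P₀ P₁ : ℂ) {t₀ t₁ : ℂ} (κ₀ κ₁ L : ℝ)

lemma lengthResidual_zero :
    lengthResidual P₀ P₁ t₀ t₁ κ₀ κ₁ L 0 0 0 0 = 140 / 13 * (‖P₁ - P₀‖ - L) := by
  simp only [lengthResidual, ofReal_zero, zero_mul, add_zero, mul_zero, ne_eq,
    OfNat.ofNat_ne_zero, not_false_eq_true, zero_pow, zero_div, div_zero, sub_self, zero_sub,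
    norm_neg, Complex.norm_div, Complex.norm_mul, norm_ofNat, norm_zero, sub_zero, map_zero,
    zero_re]
  ring

variable (h₀ : 0 < ‖t₀‖ + t₀.re) (h₁ : 0 < ‖t₁‖ + t₁.re)
include h₀ h₁

lemma lengthResidual_eq_biarcResidual (α₀ α₁ : ℝ) :
    lengthResidual P₀ P₁ t₀ t₁ κ₀ κ₁ L α₀ α₁ 0 0 =
      biarcResidual (α₀ * chi t₀) (α₀ * chi t₀ * (1 + (κ₀ * α₀ ^ 2 / 12 : ℝ) * I))
        (α₁ * chi t₁ * (1 - (κ₁ * α₁ ^ 2 / 12 : ℝ) * I)) (α₁ * chi t₁) (P₁ - P₀) L := by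
  have hA : (((α₀ ^ 2 + 0 / 12 : ℝ) : ℂ) * t₀ +
        ((κ₀ : ℂ) * ((α₀ ^ 4 / 12 : ℝ) : ℂ)) * (I * t₀)) / (α₀ * chi t₀) =
      α₀ * chi t₀ * (1 + (κ₀ * α₀ ^ 2 / 12 : ℝ) * I) := by
    rw [← sq_mul_mul_div_mul (chi_sq h₀)]
    push_cast
    ring
  have hB : (((α₁ ^ 2 - 0 / 12 : ℝ) : ℂ) * t₁ -
        ((κ₁ : ℂ) * ((α₁ ^ 4 / 12 : ℝ) : ℂ)) * (I * t₁)) / (α₁ * chi t₁) =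
      α₁ * chi t₁ * (1 - (κ₁ * α₁ ^ 2 / 12 : ℝ) * I) := by
    rw [← sq_mul_mul_div_mul (chi_sq h₁)]
    push_cast
    ring
  rw [← hA, ← hB]
  rfl

lemma lengthResidual_ge (ht₀ : ‖t₀‖ = 1) (ht₁ : ‖t₁‖ = 1) (α₀ α₁ : ℝ) :
    α₀ ^ 2 + α₁ ^ 2 - 140 / 13 * L ≤ lengthResidual P₀ P₁ t₀ t₁ κ₀ κ₁ L α₀ α₁ 0 0 := by
  have hnorm (α : ℝ) {t : ℂ} (h : 0 < ‖t‖ + t.re) (ht : ‖t‖ = 1) : ‖α * chi t‖ ^ 2 = α ^ 2 := by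
    rw [norm_mul, mul_pow, norm_chi_sq h, ht, Complex.norm_real, Real.norm_eq_abs, sq_abs,
      mul_one]
  rw [lengthResidual_eq_biarcResidual P₀ P₁ κ₀ κ₁ L h₀ h₁, ← hnorm α₀ h₀ ht₀, ← hnorm α₁ h₁ ht₁]
  exact biarcResidual_ge _ _ _ _ _ L

lemma continuous_lengthResidual :
    Continuous fun α : ℝ × ℝ => lengthResidual P₀ P₁ t₀ t₁ κ₀ κ₁ L α.1 α.2 0 0 := by
  simp only [lengthResidual_eq_biarcResidual P₀ P₁ κ₀ κ₁ L h₀ h₁, biarcResidual, biarcU, biarcV,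
    biarcv]
  fun_prop

end

theorem exists_pos_lengthResidual_eq_zero (P₀ P₁ : ℂ) {t₀ t₁ : ℂ} (κ₀ κ₁ : ℝ) {L : ℝ}
    (h₀ : 0 < ‖t₀‖ + t₀.re) (h₁ : 0 < ‖t₁‖ + t₁.re) (ht₀ : ‖t₀‖ = 1) (ht₁ : ‖t₁‖ = 1)
    (hL : ‖P₁ - P₀‖ < L) (c : ℝ) :
    ∃ α₀ : ℝ, 0 < α₀ ∧ lengthResidual P₀ P₁ t₀ t₁ κ₀ κ₁ L α₀ (c * α₀) 0 0 = 0 := by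
  let f (α : ℝ) : ℝ := lengthResidual P₀ P₁ t₀ t₁ κ₀ κ₁ L α (c * α) 0 0
  have hf : Continuous f :=
    (continuous_lengthResidual P₀ P₁ κ₀ κ₁ L h₀ h₁).comp (f := fun α : ℝ => (α, c * α))
      (by fun_prop)
  have hf0 : f 0 < 0 := by
    simp only [f, mul_zero, lengthResidual_zero]
    linarith
  obtain ⟨α₂, hα₂, hLα₂⟩ : ∃ α₂ : ℝ, 1 ≤ α₂ ∧ 140 / 13 * L < α₂ :=
    ⟨140 / 13 * L + 1, by linarith [norm_nonneg (P₁ - P₀)], by linarith⟩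
  have hfα₂ : 0 < f α₂ := by
    have := lengthResidual_ge P₀ P₁ κ₀ κ₁ L h₀ h₁ ht₀ ht₁ α₂ (c * α₂)
    nlinarith [sq_nonneg (c * α₂)]
  obtain ⟨α, ⟨hα0, -⟩, hfα⟩ :=
    intermediate_value_Icc (by linarith) hf.continuousOn ⟨hf0.le, hfα₂.le⟩
  refine ⟨α, hα0.lt_of_ne ?_, hfα⟩
  rintro rfl
  exact hf0.ne hfα

theorem stmt13_general (P₀ P₁ t₀ t₁ : ℂ) (κ₀ κ₁ L lam : ℝ)
    (ht₀ : ‖t₀‖ = 1) (ht₁ : ‖t₁‖ = 1)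
    (hchi₀ : 0 < ‖t₀‖ + t₀.re) (hchi₁ : 0 < ‖t₁‖ + t₁.re)
    (hL : ‖P₁ - P₀‖ < L) :
    (∃ α₀ : ℝ, 0 < α₀ ∧
      lengthResidual P₀ P₁ t₀ t₁ κ₀ κ₁ L α₀ (lam * α₀) 0 0 = 0) ∧
    (∃ α₀ : ℝ, 0 < α₀ ∧
      lengthResidual P₀ P₁ t₀ t₁ κ₀ κ₁ L α₀ (-(lam * α₀)) 0 0 = 0) := by
  simp only [← neg_mul]
  exact ⟨exists_pos_lengthResidual_eq_zero P₀ P₁ κ₀ κ₁ hchi₀ hchi₁ ht₀ ht₁ hL lam,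
    exists_pos_lengthResidual_eq_zero P₀ P₁ κ₀ κ₁ hchi₀ hchi₁ ht₀ ht₁ hL (-lam)⟩

/-- Theorem 2: for any prescribed length `L > |P₁ − P₀|` and any `λ > 0`, with
`β₀ = β₁ = 0`, there exists a positive `α₀` solving the length equation along
`α₁ = λα₀`, and a positive `α₀` solving it along `α₁ = −λα₀`. -/
theorem stmt13 (P₀ P₁ t₀ t₁ : ℂ) (κ₀ κ₁ L lam : ℝ)
    (ht₀ : ‖t₀‖ = 1) (ht₁ : ‖t₁‖ = 1)
    (hchi₀ : 0 < ‖t₀‖ + t₀.re) (hchi₁ : 0 < ‖t₁‖ + t₁.re)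
    (hL : ‖P₁ - P₀‖ < L) (hlam : 0 < lam) :
    (∃ α₀ : ℝ, 0 < α₀ ∧
      lengthResidual P₀ P₁ t₀ t₁ κ₀ κ₁ L α₀ (lam * α₀) 0 0 = 0) ∧
    (∃ α₀ : ℝ, 0 < α₀ ∧
      lengthResidual P₀ P₁ t₀ t₁ κ₀ κ₁ L α₀ (-(lam * α₀)) 0 0 = 0) :=
  stmt13_general P₀ P₁ t₀ t₁ κ₀ κ₁ L lam ht₀ ht₁ hchi₀ hchi₁ hL
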